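/- Fix λ < 0 and t ∈ (0,1). Let (ℓ_n)_{n≥1} be nonnegative integers with ℓ_n ≡ n (mod 2) and ℓ_n/√n → |λ|, and set t_n := 2⌊tn/2⌋ + 1. Then, as n → ∞, n · (ℓ_n/(n − t_n)) · C(t_n, (t_n+1)/2) · C(n − t_n, (n − t_n + ℓ_n − 1)/2) / C(n, (n + ℓ_n)/2) converges to 2 f_{Z^λ}(t), i.e. to (2|λ| / √(2π t (1−t)³)) · exp(−λ² t / (2(1−t))). (The factor 2 is the lattice spacing of the possible values t_n; this is the local limit theorem identifying the limiting density of the first return time Z^λ as f_{Z^λ}.) -/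

import Mathlib

/-!
With `k = 2⌊tn/2⌋ + 1` and `P_m(j) = C(m, (m + j)/2) / 2^m`, the quantity equals
`√k P_k(1) · √(n-k) P_{n-k}(ℓ-1) / (√n P_n(ℓ))` times the explicit factor
`(ℓ/√n) (n/(n-k)) √(n/k) √(n/(n-k)) → |λ| / (√t (1-t)^{3/2})`.
By the local de Moivre–Laplace theorem `√m P_m(j) → √(2/π) e^{-v/2}` whenever `m → ∞` and
`j²/m → v`, so the three walk probabilities contribute `√(2/π) e^{-λ²/(2(1-t))} / e^{-λ²/2}`.
The local limit theorem itself follows from Stirling's formula for the three factorials in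
`C(p + q, p)`, after which the exponential factor is `exp (-(p + q) · KL)` for the
Kullback–Leibler divergence `KL = x²/2 + O(x³)` at `x = (p - q)/(p + q)`.
-/

open Filter Real Stirling

theorem abs_log_one_sub_add_le {x : ℝ} (hx : |x| ≤ 1 / 2) :
    |log (1 - x) + (x + x ^ 2 / 2)| ≤ 2 * |x| ^ 3 := by
  have h := abs_log_sub_add_sum_range_le (hx.trans_lt (by norm_num)) 2
  simp only [Finset.sum_range_succ, Finset.sum_range_zero] at h
  norm_num at h
  calc |log (1 - x) + (x + x ^ 2 / 2)| = |x + x ^ 2 / 2 + log (1 - x)| := by ring_nf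
    _ ≤ |x| ^ 3 / (1 - |x|) := h
    _ ≤ 2 * |x| ^ 3 := by
      rw [div_le_iff₀ (by linarith)]
      nlinarith [pow_nonneg (abs_nonneg x) 3]

/-- The Kullback–Leibler divergence of the Bernoulli law `(1 + x) / 2` from the fair coin. -/
noncomputable def klFair (x : ℝ) : ℝ :=
  ((1 + x) * log (1 + x) + (1 - x) * log (1 - x)) / 2

theorem abs_klFair_sub_le {x : ℝ} (hx : |x| ≤ 1 / 2) :
    |klFair x - x ^ 2 / 2| ≤ 3 * |x| ^ 3 := by
  have hminus := abs_log_one_sub_add_le hx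
  have hplus := abs_log_one_sub_add_le (x := -x) (by rwa [abs_neg])
  rw [sub_neg_eq_add, abs_neg] at hplus
  have h1 : |1 + x| ≤ 3 / 2 := by rw [abs_le] at hx ⊢; constructor <;> linarith
  have h2 : |1 - x| ≤ 3 / 2 := by rw [abs_le] at hx ⊢; constructor <;> linarith
  calc |klFair x - x ^ 2 / 2|
      = |(1 + x) * (log (1 + x) + (-x + (-x) ^ 2 / 2)) +
          (1 - x) * (log (1 - x) + (x + x ^ 2 / 2))| / 2 := by
        rw [← abs_of_pos (two_pos : (0:ℝ) < 2), ← abs_div, klFair]; ring_nf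
    _ ≤ (|1 + x| * |log (1 + x) + (-x + (-x) ^ 2 / 2)| +
          |1 - x| * |log (1 - x) + (x + x ^ 2 / 2)|) / 2 := by
        gcongr; exact (abs_add_le _ _).trans (by rw [abs_mul, abs_mul])
    _ ≤ (3 / 2 * (2 * |x| ^ 3) + 3 / 2 * (2 * |x| ^ 3)) / 2 := by gcongr
    _ = 3 * |x| ^ 3 := by ring

theorem tendsto_mul_klFair {α : Type*} {l : Filter α} {a x : α → ℝ} {v : ℝ}
    (hx : Tendsto x l (nhds 0)) (hv : Tendsto (fun i => a i * x i ^ 2) l (nhds v)) :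
    Tendsto (fun i => a i * klFair (x i)) l (nhds (v / 2)) := by
  have herr : Tendsto (fun i => 3 * |a i * x i ^ 2| * |x i|) l (nhds 0) := by
    simpa using ((hv.abs.const_mul 3).mul hx.abs)
  have hsmall : ∀ᶠ i in l, |x i| ≤ 1 / 2 := by
    simpa using hx.abs.eventually (ge_mem_nhds (by norm_num : |(0:ℝ)| < 1 / 2))
  have hdiff : Tendsto (fun i => a i * klFair (x i) - a i * x i ^ 2 / 2) l (nhds 0) := by
    refine squeeze_zero_norm' ?_ herr
    filter_upwards [hsmall] with i hi
    calc ‖a i * klFair (x i) - a i * x i ^ 2 / 2‖ = |a i| * |klFair (x i) - x i ^ 2 / 2| := by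
          rw [Real.norm_eq_abs, ← abs_mul]; ring_nf
      _ ≤ |a i| * (3 * |x i| ^ 3) := by gcongr; exact abs_klFair_sub_le hi
      _ = 3 * |a i * x i ^ 2| * |x i| := by rw [abs_mul, abs_pow]; ring
  simpa using hdiff.add (hv.div_const 2)

theorem factorial_eq_stirlingSeq_mul {n : ℕ} (hn : n ≠ 0) :
    (n.factorial : ℝ) = stirlingSeq n * (√(2 * n) * (n / exp 1) ^ n) := by
  have : 0 < √(2 * n : ℝ) * (n / exp 1) ^ n := by positivity
  rw [stirlingSeq, div_mul_cancel₀ _ this.ne']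

theorem exp_neg_mul_klFair {p q : ℕ} (hp : p ≠ 0) (hq : q ≠ 0) :
    exp (-((p + q : ℝ) * klFair ((p - q) / (p + q)))) =
      ((p + q) / (2 * p) : ℝ) ^ p * ((p + q) / (2 * q) : ℝ) ^ q := by
  have hp' : (0 : ℝ) < p := by positivity
  have hq' : (0 : ℝ) < q := by positivity
  have hplus : 1 + (p - q) / (p + q) = 2 * p / (p + q : ℝ) := by field_simp; ring
  have hminus : 1 - (p - q) / (p + q) = 2 * q / (p + q : ℝ) := by field_simp; ring
  have hmul : (p + q : ℝ) * klFair ((p - q) / (p + q)) =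
      p * log (2 * p / (p + q)) + q * log (2 * q / (p + q)) := by
    rw [klFair, hplus, hminus]; field_simp
  rw [hmul, ← log_pow, ← log_pow, ← log_mul (by positivity) (by positivity), exp_neg,
    exp_log (by positivity), mul_inv, ← inv_pow, ← inv_pow, inv_div, inv_div]

theorem sqrt_mul_choose_div_two_pow_eq {p q : ℕ} (hp : p ≠ 0) (hq : q ≠ 0) :
    √(p + q : ℝ) * ((p + q).choose p : ℝ) / 2 ^ (p + q) =
      stirlingSeq (p + q) / (stirlingSeq p * stirlingSeq q) *
        √(2 / (1 - ((p - q) / (p + q) : ℝ) ^ 2)) *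
        exp (-((p + q : ℝ) * klFair ((p - q) / (p + q)))) := by
  have hp' : (0 : ℝ) < p := by positivity
  have hq' : (0 : ℝ) < q := by positivity
  have hsqrt : √(2 / (1 - ((p - q) / (p + q) : ℝ) ^ 2)) = (p + q) / (√2 * √p * √q) := by
    have h1 : 1 - ((p - q) / (p + q) : ℝ) ^ 2 = 4 * p * q / (p + q) ^ 2 := by
      field_simp; ring
    have h2 : 2 / (4 * p * q / (p + q) ^ 2) = (p + q) ^ 2 / (2 * p * q : ℝ) := by
      field_simp; ring
    rw [h1, h2, sqrt_div' _ (by positivity), sqrt_sq (by positivity), sqrt_mul (by positivity),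
      sqrt_mul zero_le_two]
  rw [Nat.cast_choose ℝ (Nat.le_add_right p q), Nat.add_sub_cancel_left,
    factorial_eq_stirlingSeq_mul (by omega), factorial_eq_stirlingSeq_mul hp,
    factorial_eq_stirlingSeq_mul hq, hsqrt, exp_neg_mul_klFair hp hq]
  push_cast
  rw [sqrt_mul zero_le_two, sqrt_mul zero_le_two, sqrt_mul zero_le_two]
  field_simp
  rw [sq_sqrt (by positivity)]
  simp only [div_pow, mul_pow, pow_add]
  field_simp

theorem tendsto_div_zero_of_tendsto_sq_div {α : Type*} {l : Filter α} {a b : α → ℝ} {v : ℝ}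
    (hb : Tendsto b l atTop) (hv : Tendsto (fun i => a i ^ 2 / b i) l (nhds v)) :
    Tendsto (fun i => a i / b i) l (nhds 0) := by
  have hsq : Tendsto (fun i => (a i / b i) ^ 2) l (nhds 0) := by
    have h := hv.mul hb.inv_tendsto_atTop
    rw [mul_zero] at h
    exact h.congr fun i => by simp only [Pi.inv_apply]; ring
  rw [tendsto_zero_iff_abs_tendsto_zero]
  simpa [Function.comp_def, sqrt_sq_eq_abs] using (continuous_sqrt.tendsto 0).comp hsq

theorem tendsto_sqrt_mul_choose_div_two_pow {α : Type*} {l : Filter α} {p q : α → ℕ} {v : ℝ}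
    (hp : Tendsto p l atTop) (hq : Tendsto q l atTop)
    (hv : Tendsto (fun i => ((p i : ℝ) - q i) ^ 2 / (p i + q i)) l (nhds v)) :
    Tendsto (fun i => √(p i + q i : ℝ) * ((p i + q i).choose (p i) : ℝ) / 2 ^ (p i + q i)) l
      (nhds (√(2 / π) * exp (-v / 2))) := by
  set x : α → ℝ := fun i => ((p i : ℝ) - q i) / (p i + q i)
  have hsum : Tendsto (fun i => (p i : ℝ) + q i) l atTop :=
    (tendsto_natCast_atTop_atTop.comp hp).atTop_add_atTop (tendsto_natCast_atTop_atTop.comp hq)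
  have hx : Tendsto x l (nhds 0) := tendsto_div_zero_of_tendsto_sq_div hsum hv
  have hstirling : Tendsto (fun i => stirlingSeq (p i + q i) /
      (stirlingSeq (p i) * stirlingSeq (q i))) l (nhds (√π / (√π * √π))) :=
    (tendsto_stirlingSeq_sqrt_pi.comp (hp.atTop_add_atTop hq)).div
      ((tendsto_stirlingSeq_sqrt_pi.comp hp).mul
        (tendsto_stirlingSeq_sqrt_pi.comp hq)) (by positivity)
  have hroot : Tendsto (fun i => √(2 / (1 - x i ^ 2))) l (nhds √(2 / (1 - 0 ^ 2))) :=
    (continuous_sqrt.tendsto _).comp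
      (tendsto_const_nhds.div (tendsto_const_nhds.sub (hx.pow 2)) (by norm_num))
  have hexp : Tendsto (fun i => exp (-((p i + q i : ℝ) * klFair (x i)))) l
      (nhds (exp (-(v / 2)))) := by
    refine (continuous_exp.tendsto _).comp (tendsto_mul_klFair hx (hv.congr fun i => ?_)).neg
    simp only [x, div_pow]
    rw [sq (p i + q i : ℝ)]
    field_simp
  have hvalue : √(2 / π) * exp (-v / 2) = √π / (√π * √π) * √(2 / (1 - 0 ^ 2)) * exp (-(v / 2)) := by
    rw [mul_self_sqrt pi_pos.le, sqrt_div zero_le_two]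
    norm_num
    field_simp
    rw [sq_sqrt pi_pos.le]
  rw [hvalue]
  refine ((hstirling.mul hroot).mul hexp).congr' ?_
  filter_upwards [hp.eventually_ne_atTop 0, hq.eventually_ne_atTop 0] with i hpi hqi
  exact (sqrt_mul_choose_div_two_pow_eq hpi hqi).symm

/-- For `m + j` even, the probability that an `m`-step simple random walk ends at `j`. -/
noncomputable def walkProb (m j : ℕ) : ℝ :=
  (m.choose ((m + j) / 2) : ℝ) / 2 ^ m

theorem tendsto_sqrt_mul_walkProb {α : Type*} {l : Filter α} {m j : α → ℕ} {v : ℝ}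
    (hm : Tendsto m l atTop) (hpar : ∀ᶠ i in l, Even (m i + j i))
    (hv : Tendsto (fun i => (j i : ℝ) ^ 2 / m i) l (nhds v)) :
    Tendsto (fun i => √(m i : ℝ) * walkProb (m i) (j i)) l (nhds (√(2 / π) * exp (-v / 2))) := by
  have hsmall : ∀ᶠ i in l, 4 * j i ≤ m i := by
    have hjm := tendsto_div_zero_of_tendsto_sq_div (tendsto_natCast_atTop_atTop.comp hm) hv
    filter_upwards [hjm.eventually (gt_mem_nhds (by norm_num : (0 : ℝ) < 1 / 4)),
      hm.eventually_gt_atTop 0] with i hi hmi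
    rw [Function.comp_apply, div_lt_iff₀ (by positivity)] at hi
    exact_mod_cast (by linarith : (4 * j i : ℝ) ≤ m i)
  let p : α → ℕ := fun i => (m i + j i) / 2
  let q : α → ℕ := fun i => (m i - j i) / 2
  have hsplit : ∀ᶠ i in l, m i = p i + q i ∧ (p i : ℝ) - q i = j i := by
    filter_upwards [hpar, hsmall] with i ⟨r, hr⟩ hi
    refine ⟨by simp only [p, q]; omega, ?_⟩
    rw [sub_eq_iff_eq_add']
    exact_mod_cast (by simp only [p, q]; omega : p i = q i + j i)
  have hq : Tendsto q l atTop := by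
    refine tendsto_atTop_mono' l ?_ ((Nat.tendsto_div_const_atTop (n := 4) (by norm_num)).comp hm)
    filter_upwards [hsmall] with i hi
    simp only [Function.comp_apply, q]
    omega
  have hp : Tendsto p l atTop := tendsto_atTop_mono (fun i => by simp only [p, q]; omega) hq
  refine (tendsto_sqrt_mul_choose_div_two_pow hp hq (hv.congr' ?_)).congr' ?_
  · filter_upwards [hsplit] with i ⟨hmi, hji⟩
    rw [hji, hmi, Nat.cast_add]
  · filter_upwards [hsplit] with i ⟨hmi, _⟩
    rw [walkProb, mul_div_assoc]
    change _ = √(m i : ℝ) * ((m i).choose (p i) / 2 ^ m i)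
    rw [hmi, Nat.cast_add]

theorem tendsto_sqrt_mul_walkProb_const {α : Type*} {l : Filter α} {m : α → ℕ} (j : ℕ)
    (hm : Tendsto m l atTop) (hpar : ∀ᶠ i in l, Even (m i + j)) :
    Tendsto (fun i => √(m i : ℝ) * walkProb (m i) j) l (nhds √(2 / π)) := by
  have hv : Tendsto (fun i => (j : ℝ) ^ 2 / m i) l (nhds 0) := by
    simpa [div_eq_mul_inv] using
      (tendsto_natCast_atTop_atTop.comp hm).inv_tendsto_atTop.const_mul ((j : ℝ) ^ 2)
  simpa using tendsto_sqrt_mul_walkProb hm hpar hv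

theorem tendsto_two_mul_floor_half_add_one_div {t : ℝ} (ht : 0 ≤ t) :
    Tendsto (fun n : ℕ => ((2 * ⌊t * n / 2⌋₊ + 1 : ℕ) : ℝ) / n) atTop (nhds t) := by
  have hfloor := (tendsto_nat_floor_mul_div_atTop (R := ℝ) (a := t / 2) (by positivity)).comp
    tendsto_natCast_atTop_atTop
  have h := (hfloor.const_mul 2).add (tendsto_one_div_atTop_nhds_zero_nat (𝕜 := ℝ))
  rw [mul_div_cancel₀ _ two_ne_zero, add_zero] at h
  refine h.congr fun n => ?_
  simp only [Function.comp_apply]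
  push_cast
  rw [mul_div_right_comm t, add_div, mul_div_assoc]

theorem Nat.tendsto_atTop_of_tendsto_div {m : ℕ → ℕ} {c : ℝ} (hc : 0 < c)
    (h : Tendsto (fun n => (m n : ℝ) / n) atTop (nhds c)) : Tendsto m atTop atTop := by
  rw [← tendsto_natCast_atTop_iff (R := ℝ)]
  refine (h.pos_mul_atTop hc tendsto_natCast_atTop_atTop).congr' ?_
  filter_upwards [eventually_ne_atTop 0] with n hn
  field_simp

theorem tendsto_self_sub_div {m : ℕ → ℕ} {c : ℝ} (hc : c < 1)
    (h : Tendsto (fun n => (m n : ℝ) / n) atTop (nhds c)) :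
    Tendsto (fun n => ((n - m n : ℕ) : ℝ) / n) atTop (nhds (1 - c)) := by
  refine (tendsto_const_nhds.sub h).congr' ?_
  filter_upwards [h.eventually (gt_mem_nhds hc), eventually_ne_atTop 0] with n hlt hn
  have hn' : (0 : ℝ) < n := by positivity
  rw [div_lt_one hn'] at hlt
  rw [Nat.cast_sub (by exact_mod_cast hlt.le)]
  field_simp

theorem eventually_one_le_of_tendsto_div_sqrt {j : ℕ → ℕ} {a : ℝ} (ha : 0 < a)
    (h : Tendsto (fun n => (j n : ℝ) / √n) atTop (nhds a)) : ∀ᶠ n in atTop, 1 ≤ j n := by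
  filter_upwards [h.eventually (lt_mem_nhds ha)] with n hn
  by_contra! hj
  simp_all [Nat.lt_one_iff.1 hj]

theorem tendsto_sub_one_div_sqrt {j : ℕ → ℕ} {a : ℝ} (hj : ∀ᶠ n in atTop, 1 ≤ j n)
    (h : Tendsto (fun n => (j n : ℝ) / √n) atTop (nhds a)) :
    Tendsto (fun n => ((j n - 1 : ℕ) : ℝ) / √n) atTop (nhds a) := by
  have h' := h.sub (tendsto_inv_atTop_zero.comp
    (tendsto_sqrt_atTop.comp tendsto_natCast_atTop_atTop))
  rw [sub_zero] at h'
  refine h'.congr' ?_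
  filter_upwards [hj] with n hn
  simp [Nat.cast_sub hn, sub_div]

theorem tendsto_sq_div_of_tendsto_div_sqrt {j : ℕ → ℕ} {a : ℝ}
    (h : Tendsto (fun n => (j n : ℝ) / √n) atTop (nhds a)) :
    Tendsto (fun n => (j n : ℝ) ^ 2 / n) atTop (nhds (a ^ 2)) := by
  simpa [div_pow] using h.pow 2

theorem tendsto_sq_div_of_tendsto_div_sqrt_of_tendsto_div {j m : ℕ → ℕ} {a c : ℝ} (hc : c ≠ 0)
    (hj : Tendsto (fun n => (j n : ℝ) / √n) atTop (nhds a))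
    (hm : Tendsto (fun n => (m n : ℝ) / n) atTop (nhds c)) :
    Tendsto (fun n => (j n : ℝ) ^ 2 / m n) atTop (nhds (a ^ 2 / c)) := by
  refine ((tendsto_sq_div_of_tendsto_div_sqrt hj).div hm hc).congr' ?_
  filter_upwards [eventually_ne_atTop 0] with n hn
  exact div_div_div_cancel_right₀ (Nat.cast_ne_zero.2 hn) _ _

theorem firstReturn_eq_walkProb {n k ℓ : ℕ} (hk : 0 < k) (hkn : k < n) (hℓ : 1 ≤ ℓ) :
    (n : ℝ) * ((ℓ : ℝ) / ((n : ℝ) - (k : ℕ))) * (k.choose ((k + 1) / 2) : ℝ) *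
        ((n - k).choose ((n - k + ℓ - 1) / 2) : ℝ) / (n.choose ((n + ℓ) / 2) : ℝ) =
      √(k : ℝ) * walkProb k 1 * (√((n - k : ℕ) : ℝ) * walkProb (n - k) (ℓ - 1)) /
          (√(n : ℝ) * walkProb n ℓ) *
        ((ℓ : ℝ) / √n * (n / ((n - k : ℕ) : ℝ)) * √(n / k) * √(n / ((n - k : ℕ) : ℝ))) := by
  have hk' : (0 : ℝ) < k := by exact_mod_cast hk
  have hnk : (0 : ℝ) < ((n - k : ℕ) : ℝ) := by exact_mod_cast Nat.sub_pos_of_lt hkn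
  have hn : (0 : ℝ) < n := by exact_mod_cast hk.trans hkn
  rw [walkProb, walkProb, walkProb, sqrt_div hn.le, sqrt_div hn.le,
    show n - k + ℓ - 1 = n - k + (ℓ - 1) by omega,
    show (2 : ℝ) ^ n = 2 ^ k * 2 ^ (n - k) by rw [← pow_add, Nat.add_sub_cancel' hkn.le],
    ← Nat.cast_sub hkn.le]
  field_simp

theorem firstReturn_limit_eq {a t : ℝ} (ht0 : 0 < t) (ht1 : t < 1) :
    √(2 / π) * (√(2 / π) * exp (-(a ^ 2 / (1 - t)) / 2)) /
        (√(2 / π) * exp (-a ^ 2 / 2)) * (a * (1 - t)⁻¹ * √t⁻¹ * √(1 - t)⁻¹) =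
      2 * (a / √(2 * π * t * (1 - t) ^ 3) * exp (-(a ^ 2 * t) / (2 * (1 - t)))) := by
  have h1t : 0 < 1 - t := sub_pos.2 ht1
  have hexp : exp (-(a ^ 2 / (1 - t)) / 2) =
      exp (-a ^ 2 / 2) * exp (-(a ^ 2 * t) / (2 * (1 - t))) := by
    rw [← exp_add]; congr 1; field_simp; ring
  have hroot : √(2 * π * t * (1 - t) ^ 3) = √2 * √π * √t * ((1 - t) * √(1 - t)) := by
    rw [pow_succ, sqrt_mul (by positivity), sqrt_mul (by positivity), sqrt_mul (by positivity),
      sqrt_mul (by positivity), sqrt_sq h1t.le]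
  rw [hexp, hroot, sqrt_div zero_le_two, sqrt_inv, sqrt_inv]
  have : 0 < √π := sqrt_pos.2 pi_pos
  have : 0 < √t := sqrt_pos.2 ht0
  have : 0 < √(1 - t) := sqrt_pos.2 h1t
  field_simp
  rw [sq_sqrt zero_le_two]
  ring

theorem local_limit_firstReturn (lam : ℝ) (hlam : lam < 0) (t : ℝ)
    (ht : t ∈ Set.Ioo (0 : ℝ) 1) (ℓ : ℕ → ℕ)
    (hpar : ∀ n, ℓ n % 2 = n % 2)
    (hlim : Tendsto (fun n : ℕ => (ℓ n : ℝ) / Real.sqrt n) atTop (nhds |lam|)) :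
    Tendsto
      (fun n : ℕ =>
        (n : ℝ) * ((ℓ n : ℝ) / ((n : ℝ) - (2 * ⌊t * n / 2⌋₊ + 1 : ℕ))) *
          (Nat.choose (2 * ⌊t * n / 2⌋₊ + 1) ((2 * ⌊t * n / 2⌋₊ + 1 + 1) / 2) : ℝ) *
          (Nat.choose (n - (2 * ⌊t * n / 2⌋₊ + 1))
            ((n - (2 * ⌊t * n / 2⌋₊ + 1) + ℓ n - 1) / 2) : ℝ) /
          (Nat.choose n ((n + ℓ n) / 2) : ℝ))
      atTop
      (nhds (2 * (|lam| / Real.sqrt (2 * π * t * (1 - t) ^ 3) *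
        Real.exp (-(lam ^ 2 * t) / (2 * (1 - t)))))) := by
  obtain ⟨ht0, ht1⟩ := ht
  have h1t : 0 < 1 - t := sub_pos.2 ht1
  set k : ℕ → ℕ := fun n => 2 * ⌊t * n / 2⌋₊ + 1 with hk_def
  have hk_odd (n : ℕ) : k n % 2 = 1 := by simp only [hk_def]; omega
  have hk : Tendsto (fun n => (k n : ℝ) / n) atTop (nhds t) :=
    tendsto_two_mul_floor_half_add_one_div ht0.le
  have hnk := tendsto_self_sub_div ht1 hk
  have hk_top := Nat.tendsto_atTop_of_tendsto_div ht0 hk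
  have hnk_top := Nat.tendsto_atTop_of_tendsto_div h1t hnk
  have hℓ_pos := eventually_one_le_of_tendsto_div_sqrt (abs_pos.2 hlam.ne) hlim
  have hA := tendsto_sqrt_mul_walkProb_const 1 hk_top
    (Eventually.of_forall fun n => Nat.even_iff.2 (by have := hk_odd n; omega))
  have hB := tendsto_sqrt_mul_walkProb (j := fun n => ℓ n - 1) hnk_top
    (by
      filter_upwards [hℓ_pos, hnk_top.eventually_gt_atTop 0] with n hℓn hnkn
      exact Nat.even_iff.2 (by have := hpar n; have := hk_odd n; omega))
    (tendsto_sq_div_of_tendsto_div_sqrt_of_tendsto_div h1t.ne'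
      (tendsto_sub_one_div_sqrt hℓ_pos hlim) hnk)
  have hC := tendsto_sqrt_mul_walkProb (m := fun n => n) tendsto_id
    (Eventually.of_forall fun n => Nat.even_iff.2 (by have := hpar n; omega))
    (tendsto_sq_div_of_tendsto_div_sqrt hlim)
  have hD : Tendsto (fun n : ℕ => (ℓ n : ℝ) / √n * (n / ((n - k n : ℕ) : ℝ)) * √(n / k n) *
      √(n / ((n - k n : ℕ) : ℝ))) atTop (nhds (|lam| * (1 - t)⁻¹ * √t⁻¹ * √(1 - t)⁻¹)) := by
    have hk_inv := (hk.inv₀ ht0.ne').congr fun n => inv_div _ _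
    have hnk_inv := (hnk.inv₀ h1t.ne').congr fun n => inv_div _ _
    exact ((hlim.mul hnk_inv).mul hk_inv.sqrt).mul hnk_inv.sqrt
  rw [← sq_abs lam, ← firstReturn_limit_eq ht0 ht1]
  refine (((hA.mul hB).div hC (by positivity)).mul hD).congr' ?_
  filter_upwards [hℓ_pos, hk_top.eventually_gt_atTop 0, hnk_top.eventually_gt_atTop 0]
    with n hℓn hkn hnkn
  exact (firstReturn_eq_walkProb hkn (Nat.lt_of_sub_pos hnkn) hℓn).symm
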